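/- arXiv:2506.16536 — 5 statements merged into one kernel-verified Lean document; each statement's English description precedes it below -/
import Mathlib

section
/- Let n be a positive integer and let G = ℤ/nℤ ⋊ (ℤ/nℤ)ˣ be the holomorph of ℤ/nℤ. Then the number of conjugacy classes of G equals φ(n) · Σ_{d | n} 1/φ(d) = Σ_{d | n} φ(n)/φ(d), where φ is Euler's totient function and the sum runs over the positive divisors d of n (note φ(d) divides φ(n) for every divisor d of n). -/
/-- The group homomorphism `AddAut A →* MulAut (Multiplicative A)`. -/
def addAutToMulAut (A : Type*) [AddZeroClass A] :
    Multiplicative (AddAut A) →* MulAut (Multiplicative A) where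
  toFun e := AddEquiv.toMultiplicative e.toAdd
  map_one' := rfl
  map_mul' _ _ := rfl

/-- The action of `(ℤ/nℤ)ˣ` on `ℤ/nℤ` (written multiplicatively) by multiplication. -/
def holAction (n : ℕ) : (ZMod n)ˣ →* MulAut (Multiplicative (ZMod n)) :=
  (addAutToMulAut (ZMod n)).comp (DistribMulAction.toAddAut (ZMod n)ˣ (ZMod n))

/-- The holomorph `ℤ/nℤ ⋊ (ℤ/nℤ)ˣ`, where the unit group acts by multiplication. -/
abbrev Hol (n : ℕ) := SemidirectProduct (Multiplicative (ZMod n)) (ZMod n)ˣ (holAction n)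

/-! ### Auxiliary lemmas -/

lemma holAction_apply {n : ℕ} (v : (ZMod n)ˣ) (x : Multiplicative (ZMod n)) :
    Multiplicative.toAdd (holAction n v x) = (v : ZMod n) * Multiplicative.toAdd x := rfl

lemma holAction_inv_apply {n : ℕ} (v : (ZMod n)ˣ) (x : Multiplicative (ZMod n)) :
    Multiplicative.toAdd ((holAction n v)⁻¹ x)
      = ((v⁻¹ : (ZMod n)ˣ) : ZMod n) * Multiplicative.toAdd x := rfl

/-- Conjugacy in the holomorph, explicitly. -/
lemma hol_isConj_iff {n : ℕ} (x y : Hol n) :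
    IsConj x y ↔ x.right = y.right ∧ ∃ (v : (ZMod n)ˣ) (b : ZMod n),
      Multiplicative.toAdd y.left
        = (v : ZMod n) * Multiplicative.toAdd x.left + (1 - (x.right : ZMod n)) * b := by
  rw [isConj_iff]
  constructor
  · rintro ⟨z, rfl⟩
    refine ⟨by simp [mul_comm, mul_assoc], z.right, Multiplicative.toAdd z.left, ?_⟩
    simp only [SemidirectProduct.mul_left, SemidirectProduct.mul_right,
      SemidirectProduct.inv_left, SemidirectProduct.inv_right, map_inv, map_mul,
      toAdd_mul, toAdd_inv, holAction_apply, holAction_inv_apply, MulAut.mul_apply]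
    have h : (z.right : ZMod n) * ((z.right⁻¹ : (ZMod n)ˣ) : ZMod n) = 1 := by
      rw [← Units.val_mul, mul_inv_cancel, Units.val_one]
    linear_combination (-(↑x.right * Multiplicative.toAdd z.left)) * h
  · rintro ⟨hr, v, b, hb⟩
    refine ⟨⟨Multiplicative.ofAdd b, v⟩, ?_⟩
    ext
    · apply Multiplicative.toAdd.injective
      simp only [SemidirectProduct.mul_left, SemidirectProduct.mul_right,
        SemidirectProduct.inv_left, SemidirectProduct.inv_right, map_inv, map_mul,
        toAdd_mul, toAdd_inv, holAction_apply, holAction_inv_apply, MulAut.mul_apply,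
        toAdd_ofAdd, hb, ← hr]
      have h : (v : ZMod n) * ((v⁻¹ : (ZMod n)ˣ) : ZMod n) = 1 := by
        rw [← Units.val_mul, mul_inv_cancel, Units.val_one]
      show (b + (v : ZMod n) * Multiplicative.toAdd x.left
          + -((v : ZMod n) * ((x.right : ZMod n) * (((v⁻¹ : (ZMod n)ˣ) : ZMod n) * b))) : ZMod n)
        = (v : ZMod n) * Multiplicative.toAdd x.left + (1 - (x.right : ZMod n)) * b
      linear_combination (-((x.right : ZMod n) * b)) * h
    · simp [← hr, mul_comm, mul_assoc]

lemma proj_val_eq_zero_iff {m d : ℕ} [NeZero m] (hd : d ∣ m) (z : ZMod m) :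
    ZMod.castHom hd (ZMod d) z = 0 ↔ d ∣ z.val := by
  haveI : NeZero d := ⟨fun h => by subst h; exact (NeZero.ne m) (Nat.eq_zero_of_zero_dvd hd)⟩
  rw [ZMod.castHom_apply, ← ZMod.natCast_val, ZMod.natCast_eq_zero_iff]

lemma dvd_natCast_gcd {n : ℕ} [NeZero n] (c : ZMod n) :
    c ∣ ((Nat.gcd c.val n : ℕ) : ZMod n) := by
  have h := Nat.gcd_eq_gcd_ab c.val n
  have h2 : ((Nat.gcd c.val n : ℤ) : ZMod n)
      = ((c.val * Nat.gcdA c.val n + n * Nat.gcdB c.val n : ℤ) : ZMod n) := by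
    exact_mod_cast congrArg (fun z : ℤ => ((z : ZMod n))) h
  push_cast at h2
  rw [ZMod.natCast_self, ZMod.natCast_val, ZMod.cast_id] at h2
  rw [h2]
  exact ⟨((Nat.gcdA c.val n : ℤ) : ZMod n), by ring⟩

lemma natCast_dvd_of_dvd_val {n g : ℕ} [NeZero n] {z : ZMod n} (h : g ∣ z.val) :
    ((g : ℕ) : ZMod n) ∣ z := by
  obtain ⟨k, hk⟩ := h
  exact ⟨(k : ℕ), by rw [← Nat.cast_mul, ← hk, ZMod.natCast_val, ZMod.cast_id]⟩

lemma gcd_val_proj {n g : ℕ} [NeZero n] [NeZero g] (hg : g ∣ n) (z : ZMod n) :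
    Nat.gcd (ZMod.castHom hg (ZMod g) z).val g = Nat.gcd z.val g := by
  rw [ZMod.castHom_apply, ← ZMod.natCast_val, ZMod.val_natCast]
  conv_rhs => rw [Nat.gcd_comm, Nat.gcd_rec]

/-- In `ZMod m`, elements with the same gcd with `m` are unit multiples of each other. -/
lemma exists_unit_mul_of_gcd_eq {m : ℕ} [NeZero m] (a a' : ZMod m)
    (h : Nat.gcd a.val m = Nat.gcd a'.val m) :
    ∃ v : (ZMod m)ˣ, a' = (v : ZMod m) * a := by
  have hm : 0 < m := Nat.pos_of_ne_zero (NeZero.ne m)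
  have hd : 0 < Nat.gcd a.val m := Nat.gcd_pos_of_pos_right _ hm
  set d := Nat.gcd a.val m with hdef
  have hdvm : d ∣ m := Nat.gcd_dvd_right _ _
  have hm'dvd : m / d ∣ m := Nat.div_dvd_of_dvd hdvm
  haveI : NeZero (m / d) := ⟨(Nat.div_pos (Nat.le_of_dvd hm hdvm) hd).ne'⟩
  have cop : Nat.Coprime (a.val / d) (m / d) := Nat.coprime_div_gcd_div_gcd hd
  have cop' : Nat.Coprime (a'.val / d) (m / d) := by
    have hd' : 0 < Nat.gcd a'.val m := h ▸ hd
    have := Nat.coprime_div_gcd_div_gcd hd'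
    rwa [← h] at this
  set w : (ZMod (m / d))ˣ :=
    ZMod.unitOfCoprime _ cop' * (ZMod.unitOfCoprime _ cop)⁻¹ with hw
  obtain ⟨v, hv⟩ := ZMod.unitsMap_surjective hm'dvd w
  refine ⟨v, ?_⟩
  have hda : d ∣ a.val := Nat.gcd_dvd_left _ _
  have hda' : d ∣ a'.val := h ▸ Nat.gcd_dvd_left a'.val m
  set z : ZMod m := ((a'.val / d : ℕ) : ZMod m) - (v : ZMod m) * ((a.val / d : ℕ) : ZMod m)
    with hz
  have key : ZMod.castHom hm'dvd (ZMod (m / d)) z = 0 := by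
    have hva : ZMod.castHom hm'dvd (ZMod (m/d)) (v : ZMod m) = (w : ZMod (m/d)) := by
      rw [← hv, ZMod.unitsMap_def, Units.coe_map]; rfl
    rw [hz, map_sub, map_mul, hva, map_natCast, map_natCast]
    have : (w : ZMod (m/d)) * ((a.val / d : ℕ) : ZMod (m/d))
        = ((a'.val / d : ℕ) : ZMod (m/d)) := by
      rw [← ZMod.coe_unitOfCoprime _ cop, ← ZMod.coe_unitOfCoprime _ cop', hw,
        ← Units.val_mul, inv_mul_cancel_right]
    rw [this, sub_self]
  rw [proj_val_eq_zero_iff] at key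
  have hdz : ((d : ℕ) : ZMod m) * z = 0 := by
    have : ((d : ℕ) : ZMod m) * ((z.val : ℕ) : ZMod m) = 0 := by
      rw [← Nat.cast_mul, ZMod.natCast_eq_zero_iff]
      obtain ⟨k, hk⟩ := key
      exact ⟨k, by rw [hk, ← mul_assoc, Nat.mul_div_cancel' hdvm]⟩
    rwa [ZMod.natCast_val, ZMod.cast_id] at this
  have ha : a = ((d : ℕ) : ZMod m) * ((a.val / d : ℕ) : ZMod m) := by
    rw [← Nat.cast_mul, Nat.mul_div_cancel' hda, ZMod.natCast_val, ZMod.cast_id]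
  have ha' : a' = ((d : ℕ) : ZMod m) * ((a'.val / d : ℕ) : ZMod m) := by
    rw [← Nat.cast_mul, Nat.mul_div_cancel' hda', ZMod.natCast_val, ZMod.cast_id]
  calc a' = ((d : ℕ) : ZMod m) * ((a'.val / d : ℕ) : ZMod m) := ha'
    _ = ((d : ℕ) : ZMod m) * z
          + (v : ZMod m) * (((d:ℕ) : ZMod m) * ((a.val / d : ℕ) : ZMod m)) := by
        rw [hz]; ring
    _ = (v : ZMod m) * a := by rw [hdz, ← ha, zero_add]

lemma gcd_dvd_of_affine {n : ℕ} [NeZero n] (a a' c : ZMod n) (v : (ZMod n)ˣ) (b : ZMod n)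
    (h : a' = (v : ZMod n) * a + c * b) :
    Nat.gcd a.val (Nat.gcd c.val n) ∣ Nat.gcd a'.val (Nat.gcd c.val n) := by
  set e := Nat.gcd a.val (Nat.gcd c.val n) with he
  have hen : e ∣ n := (Nat.gcd_dvd_right _ _).trans (Nat.gcd_dvd_right _ _)
  have hea : e ∣ a.val := Nat.gcd_dvd_left _ _
  have hec : e ∣ c.val := (Nat.gcd_dvd_right _ _).trans (Nat.gcd_dvd_left _ _)
  have hea' : e ∣ a'.val := by
    rw [← proj_val_eq_zero_iff hen] at hea hec ⊢
    rw [h, map_add, map_mul, map_mul, hea, hec, mul_zero, zero_mul, add_zero]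
  exact Nat.dvd_gcd hea' (Nat.dvd_gcd hec hen)

lemma affine_of_gcd_eq {n : ℕ} [NeZero n] (a a' c : ZMod n)
    (h : Nat.gcd a.val (Nat.gcd c.val n) = Nat.gcd a'.val (Nat.gcd c.val n)) :
    ∃ (v : (ZMod n)ˣ) (b : ZMod n), a' = (v : ZMod n) * a + c * b := by
  set g := Nat.gcd c.val n with hgdef
  have hgn : g ∣ n := Nat.gcd_dvd_right _ _
  haveI : NeZero g := ⟨(Nat.gcd_pos_of_pos_right _ (Nat.pos_of_ne_zero (NeZero.ne n))).ne'⟩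
  have hgcd : Nat.gcd (ZMod.castHom hgn (ZMod g) a).val g
      = Nat.gcd (ZMod.castHom hgn (ZMod g) a').val g := by
    rw [gcd_val_proj hgn a, gcd_val_proj hgn a']
    exact h
  obtain ⟨w, hw⟩ := exists_unit_mul_of_gcd_eq _ _ hgcd
  obtain ⟨v, hv⟩ := ZMod.unitsMap_surjective hgn w
  have hvc : ZMod.castHom hgn (ZMod g) (v : ZMod n) = (w : ZMod g) := by
    rw [← hv, ZMod.unitsMap_def, Units.coe_map]; rfl
  have hz : ZMod.castHom hgn (ZMod g) (a' - (v : ZMod n) * a) = 0 := by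
    rw [map_sub, map_mul, hvc, ← hw, sub_self]
  rw [proj_val_eq_zero_iff hgn] at hz
  have hcd : c ∣ a' - (v : ZMod n) * a :=
    dvd_trans (dvd_natCast_gcd c) (natCast_dvd_of_dvd_val hz)
  obtain ⟨b, hb⟩ := hcd
  exact ⟨v, b, by rw [← hb]; ring⟩

/-- The complete conjugacy invariant: the gcd of `n`, the `ZMod n` part, and `1 - u`. -/
def holD {n : ℕ} (x : Hol n) : ℕ :=
  Nat.gcd (Multiplicative.toAdd x.left).val (Nat.gcd ((1 - (x.right : ZMod n)).val) n)

lemma isConj_iff_holD {n : ℕ} [NeZero n] (x y : Hol n) :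
    IsConj x y ↔ x.right = y.right ∧ holD x = holD y := by
  rw [hol_isConj_iff]
  constructor
  · rintro ⟨hr, v, b, hb⟩
    refine ⟨hr, ?_⟩
    unfold holD
    rw [← hr]
    apply Nat.dvd_antisymm
    · exact gcd_dvd_of_affine _ _ _ v b hb
    · apply gcd_dvd_of_affine _ _ _ v⁻¹ (-(((v⁻¹ : (ZMod n)ˣ) : ZMod n) * b))
      have h : ((v⁻¹ : (ZMod n)ˣ) : ZMod n) * (v : ZMod n) = 1 := by
        rw [← Units.val_mul, inv_mul_cancel, Units.val_one]
      linear_combination (-((v⁻¹ : (ZMod n)ˣ) : ZMod n)) * hb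
        + (-(Multiplicative.toAdd x.left)) * h
  · rintro ⟨hr, hD⟩
    refine ⟨hr, ?_⟩
    unfold holD at hD
    rw [← hr] at hD
    exact affine_of_gcd_eq _ _ _ hD

lemma divisors_gcd_eq_filter (n c' : ℕ) (hn : n ≠ 0) :
    Nat.divisors (Nat.gcd c' n) = n.divisors.filter (fun d => d ∣ c') := by
  ext e
  simp only [Nat.mem_divisors, Finset.mem_filter]
  constructor
  · rintro ⟨he, _⟩
    exact ⟨⟨he.trans (Nat.gcd_dvd_right _ _), hn⟩, he.trans (Nat.gcd_dvd_left _ _)⟩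
  · rintro ⟨⟨hen, _⟩, hec⟩
    exact ⟨Nat.dvd_gcd hec hen, fun h0 => hn (Nat.eq_zero_of_gcd_eq_zero_right h0)⟩

lemma ker_count {n d : ℕ} [NeZero n] (hdn : d ∣ n) :
    (Finset.univ.filter (fun u : (ZMod n)ˣ => d ∣ ((1 : ZMod n) - (u : ZMod n)).val)).card
      = n.totient / d.totient := by
  classical
  haveI : NeZero d := ⟨fun h => by subst h; exact (NeZero.ne n) (Nat.eq_zero_of_zero_dvd hdn)⟩
  have hP : ∀ u : (ZMod n)ˣ, (d ∣ ((1 : ZMod n) - (u : ZMod n)).val)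
      ↔ ZMod.unitsMap hdn u = 1 := by
    intro u
    rw [← proj_val_eq_zero_iff hdn, map_sub, map_one, sub_eq_zero, Units.ext_iff,
      ZMod.unitsMap_def, Units.coe_map, Units.val_one]
    simp only [MonoidHom.coe_coe]
    exact eq_comm
  have hcard : (Finset.univ.filter
      (fun u : (ZMod n)ˣ => d ∣ ((1 : ZMod n) - (u : ZMod n)).val)).card
      = Nat.card (ZMod.unitsMap hdn).ker := by
    rw [Nat.card_eq_fintype_card, Fintype.card_subtype]
    congr 1
    apply Finset.filter_congr
    intro u _
    simp only [MonoidHom.mem_ker, hP u]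
  rw [hcard]
  have hsurj := ZMod.unitsMap_surjective (n := d) (m := n) hdn
  have h1 : Nat.card (ZMod n)ˣ
      = Nat.card ((ZMod n)ˣ ⧸ (ZMod.unitsMap hdn).ker) * Nat.card (ZMod.unitsMap hdn).ker :=
    Subgroup.card_eq_card_quotient_mul_card_subgroup _
  have h2 : Nat.card ((ZMod n)ˣ ⧸ (ZMod.unitsMap hdn).ker) = Nat.card (ZMod d)ˣ :=
    Nat.card_congr (QuotientGroup.quotientKerEquivOfSurjective _ hsurj).toEquiv
  rw [h2] at h1
  have hn' : Nat.card (ZMod n)ˣ = n.totient := by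
    rw [Nat.card_eq_fintype_card, ZMod.card_units_eq_totient]
  have hd' : Nat.card (ZMod d)ˣ = d.totient := by
    rw [Nat.card_eq_fintype_card, ZMod.card_units_eq_totient]
  rw [hn', hd'] at h1
  symm
  exact Nat.div_eq_of_eq_mul_left (Nat.totient_pos.2 (Nat.pos_of_ne_zero (NeZero.ne d)))
    (by rw [h1, mul_comm])

/-- The number of conjugacy classes of the holomorph `ℤ/nℤ ⋊ (ℤ/nℤ)ˣ` equals
`Σ_{d ∣ n} φ(n)/φ(d)` (note `φ(d) ∣ φ(n)` for every `d ∣ n`). -/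
theorem stmt_2 (n : ℕ) (hn : 0 < n) :
    Nat.card (ConjClasses (Hol n)) = ∑ d ∈ n.divisors, n.totient / d.totient := by
  classical
  haveI : NeZero n := ⟨hn.ne'⟩
  set f : Hol n → (ZMod n)ˣ × ℕ := fun x => (x.right, holD x) with hf
  have hcongr : ∀ x y : Hol n, IsConj x y → f x = f y := by
    intro x y h
    rw [isConj_iff_holD] at h
    exact Prod.ext h.1 h.2
  set F : ConjClasses (Hol n) → (ZMod n)ˣ × ℕ :=
    Quotient.lift f (fun a b h => hcongr a b h) with hF
  have hinj : Function.Injective F := by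
    intro q q'
    induction q using Quotient.inductionOn with | h x =>
    induction q' using Quotient.inductionOn with | h y =>
    intro h
    apply Quotient.sound
    show IsConj x y
    rw [isConj_iff_holD]
    have h1 : x.right = y.right := congrArg Prod.fst h
    have h2 : holD x = holD y := congrArg Prod.snd h
    exact ⟨h1, h2⟩
  have h1 : Nat.card (ConjClasses (Hol n)) = Nat.card (Set.range F) :=
    (Nat.card_range_of_injective hinj).symm
  have hrange : Set.range F = Set.range f := by
    ext p
    constructor
    · rintro ⟨q, rfl⟩
      obtain ⟨x, rfl⟩ := Quotient.exists_rep q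
      exact ⟨x, rfl⟩
    · rintro ⟨x, rfl⟩
      exact ⟨⟦x⟧, rfl⟩
  set S : Finset ((ZMod n)ˣ × ℕ) := Finset.univ.biUnion
    (fun u : (ZMod n)ˣ =>
      (Nat.divisors (Nat.gcd ((1 - (u : ZMod n)).val) n)).image (fun d => (u, d))) with hS
  have hrange2 : Set.range f = ↑S := by
    ext p
    constructor
    · rintro ⟨x, rfl⟩
      rw [Finset.mem_coe, hS, Finset.mem_biUnion]
      exact ⟨x.right, Finset.mem_univ _, Finset.mem_image.2 ⟨holD x,
        Nat.mem_divisors.2 ⟨Nat.gcd_dvd_right _ _, (Nat.gcd_pos_of_pos_right _ hn).ne'⟩, rfl⟩⟩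
    · intro hp
      rw [Finset.mem_coe, hS, Finset.mem_biUnion] at hp
      obtain ⟨u, -, hp⟩ := hp
      rw [Finset.mem_image] at hp
      obtain ⟨d, hd, rfl⟩ := hp
      rw [Nat.mem_divisors] at hd
      refine ⟨⟨Multiplicative.ofAdd ((d : ℕ) : ZMod n), u⟩, ?_⟩
      have hright : (⟨Multiplicative.ofAdd ((d : ℕ) : ZMod n), u⟩ : Hol n).right = u := rfl
      have hDval : holD (⟨Multiplicative.ofAdd ((d : ℕ) : ZMod n), u⟩ : Hol n) = d := by
        unfold holD
        rw [hright]
        show Nat.gcd (((d : ℕ) : ZMod n)).val (Nat.gcd ((1 - (u : ZMod n)).val) n) = d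
        set g := Nat.gcd ((1 - (u : ZMod n)).val) n with hg
        have hgn : g ∣ n := Nat.gcd_dvd_right _ _
        have hdg : d ∣ g := hd.1
        rw [ZMod.val_natCast]
        calc Nat.gcd (d % n) g = Nat.gcd g (d % n) := Nat.gcd_comm _ _
          _ = Nat.gcd (d % n % g) g := Nat.gcd_rec _ _
          _ = Nat.gcd (d % g) g := by rw [Nat.mod_mod_of_dvd _ hgn]
          _ = Nat.gcd g d := (Nat.gcd_rec _ _).symm
          _ = d := by rw [Nat.gcd_comm, Nat.gcd_eq_left hdg]
      rw [hf]
      show (_, holD _) = (u, d)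
      rw [hDval, hright]
  rw [h1, hrange, hrange2]
  rw [Nat.card_coe_set_eq, Set.ncard_coe_finset]
  have hcardS : S.card = ∑ u : (ZMod n)ˣ,
      (Nat.divisors (Nat.gcd ((1 - (u : ZMod n)).val) n)).card := by
    rw [hS]
    rw [Finset.card_biUnion]
    · refine Finset.sum_congr rfl (fun u _ => ?_)
      apply Finset.card_image_of_injective
      intro a b hab
      simpa using hab
    · intro u _ u' _ hne
      rw [Function.onFun, Finset.disjoint_left]
      intro p hp hp'
      simp only [Finset.mem_image] at hp hp'
      obtain ⟨a, _, rfl⟩ := hp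
      obtain ⟨b, _, hb⟩ := hp'
      exact hne (congrArg Prod.fst hb).symm
  rw [hcardS]
  have step : ∀ u : (ZMod n)ˣ, (Nat.divisors (Nat.gcd ((1 - (u : ZMod n)).val) n)).card
      = ∑ d ∈ n.divisors, if d ∣ ((1 : ZMod n) - (u : ZMod n)).val then 1 else 0 := by
    intro u
    rw [divisors_gcd_eq_filter _ _ hn.ne', Finset.card_filter]
  simp_rw [step]
  rw [Finset.sum_comm]
  refine Finset.sum_congr rfl (fun d hd => ?_)
  rw [← Finset.card_filter]
  exact ker_count (Nat.dvd_of_mem_divisors hd)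
end

section
/- Let n be a positive integer and let R_n be the dihedral quandle of order n. Then the number of isomorphism classes of virtual quandles whose underlying quandle is R_n — equivalently, the number of conjugacy classes of the quandle automorphism group Aut(R_n) — equals φ(n) · Σ_{d | n} 1/φ(d) = Σ_{d | n} φ(n)/φ(d), where φ is Euler's totient function and the sum runs over the positive divisors d of n. -/
/-- An automorphism of the rack `(X, s)`: a bijection `ψ` with `ψ ∘ s x = s (ψ x) ∘ ψ`. -/
def RackAut {X : Type*} (s : X → Equiv.Perm X) : Type _ :=
  {f : Equiv.Perm X // ∀ x y : X, f (s x y) = s (f x) (f y)}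

/-- Two virtual structures on the rack `(X, s)` give isomorphic virtual racks iff there
is a rack automorphism `ψ` with `ψ ∘ f₁ = f₂ ∘ ψ`. -/
def VirtIso {X : Type*} (s : X → Equiv.Perm X) (f₁ f₂ : RackAut s) : Prop :=
  ∃ ψ : RackAut s, ψ.1 * f₁.1 = f₂.1 * ψ.1

/-- The isomorphism classes of virtual racks whose underlying rack is `(X, s)`. -/
def VirtualClasses {X : Type*} (s : X → Equiv.Perm X) : Type _ :=
  Quot (VirtIso s)

/-- The dihedral quandle structure on `ℤ/nℤ`: `s g` is the involution `h ↦ 2g - h`. -/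
def dihedralS (n : ℕ) : ZMod n → Equiv.Perm (ZMod n) := fun g =>
  ⟨fun h => 2 * g - h, fun h => 2 * g - h, fun _ => sub_sub_cancel _ _, fun _ => sub_sub_cancel _ _⟩

set_option linter.unusedSectionVars false

section Affine
variable {n : ℕ}

lemma dihedralS_apply (g h : ZMod n) : dihedralS n g h = 2 * g - h := rfl

/-- The affine permutation `x ↦ u x + b`. -/
def affinePerm (u : (ZMod n)ˣ) (b : ZMod n) : Equiv.Perm (ZMod n) where
  toFun x := (u : ZMod n) * x + b
  invFun x := ((u⁻¹ : (ZMod n)ˣ) : ZMod n) * (x - b)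
  left_inv x := by
    simp only [add_sub_cancel_right, ← mul_assoc]
    norm_cast
    rw [inv_mul_cancel]
    simp
  right_inv x := by
    simp only [← mul_assoc]
    norm_cast
    rw [mul_inv_cancel]
    simp

lemma affinePerm_apply (u : (ZMod n)ˣ) (b x : ZMod n) :
    affinePerm u b x = (u : ZMod n) * x + b := rfl

/-- The affine rack automorphism. -/
def affineAut (p : (ZMod n)ˣ × ZMod n) : RackAut (dihedralS n) :=
  ⟨affinePerm p.1 p.2, fun x y => by
    simp only [dihedralS_apply, affinePerm_apply]; ring⟩

lemma affineAut_apply (p : (ZMod n)ˣ × ZMod n) (x : ZMod n) :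
    (affineAut p).1 x = (p.1 : ZMod n) * x + p.2 := rfl

lemma rackAut_eq_affine [NeZero n] (f : RackAut (dihedralS n)) :
    ∃ p : (ZMod n)ˣ × ZMod n, f = affineAut p := by
  obtain ⟨F, hF⟩ := f
  simp only [dihedralS_apply] at hF
  set a := F 1 - F 0 with ha
  set b := F 0 with hb
  have key : ∀ k : ℕ, F ((k : ℕ) : ZMod n) = a * k + b := by
    intro k
    induction k using Nat.twoStepInduction with
    | zero => simp [hb]
    | one => simp [ha]
    | more k ih1 ih2 =>
      have h2 : ((k + 2 : ℕ) : ZMod n) = 2 * ((k+1 : ℕ) : ZMod n) - ((k : ℕ) : ZMod n) := by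
        push_cast; ring
      rw [h2, hF, ih2, ih1]
      push_cast; ring
  have key' : ∀ x : ZMod n, F x = a * x + b := by
    intro x
    conv_lhs => rw [← ZMod.natCast_rightInverse x]
    rw [key x.val, ZMod.natCast_rightInverse x]
  have hu : IsUnit a := by
    obtain ⟨z, hz⟩ := F.surjective (1 + b)
    rw [key'] at hz
    exact IsUnit.of_mul_eq_one z (by linear_combination hz)
  refine ⟨(hu.unit, b), Subtype.ext (Equiv.ext fun x => ?_)⟩
  rw [key' x]
  show a * x + b = (hu.unit : ZMod n) * x + b
  rw [IsUnit.unit_spec]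

lemma affineAut_injective [NeZero n] : Function.Injective (affineAut (n := n)) := by
  rintro ⟨u, b⟩ ⟨u', b'⟩ h
  have h0 := congrArg (fun f : RackAut (dihedralS n) => f.1 0) h
  have h1 := congrArg (fun f : RackAut (dihedralS n) => f.1 1) h
  simp only [affineAut_apply, mul_zero, zero_add, mul_one] at h0 h1
  have hu : (u : ZMod n) = u' := by rw [h0] at h1; exact add_right_cancel h1
  exact Prod.ext (Units.ext hu) h0

noncomputable def affineEquiv (n : ℕ) [NeZero n] :
    ((ZMod n)ˣ × ZMod n) ≃ RackAut (dihedralS n) :=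
  Equiv.ofBijective affineAut ⟨affineAut_injective, fun f => by
    obtain ⟨p, hp⟩ := rackAut_eq_affine f; exact ⟨p, hp.symm⟩⟩

lemma affineEquiv_apply (n : ℕ) [NeZero n] (p) : affineEquiv n p = affineAut p := rfl

/-- The relation on pairs corresponding to `VirtIso`. -/
def rel (n : ℕ) (p q : (ZMod n)ˣ × ZMod n) : Prop :=
  p.1 = q.1 ∧ ∃ u : (ZMod n)ˣ, ∃ c : ZMod n, q.2 = (u : ZMod n) * p.2 + (1 - (p.1 : ZMod n)) * c

lemma virtIso_iff (n : ℕ) [NeZero n] (p q : (ZMod n)ˣ × ZMod n) :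
    rel n p q ↔ VirtIso (dihedralS n) (affineEquiv n p) (affineEquiv n q) := by
  obtain ⟨a₁, b₁⟩ := p
  obtain ⟨a₂, b₂⟩ := q
  constructor
  · rintro ⟨ha, u, c, hc⟩
    simp only at ha hc
    refine ⟨affineAut (u, c), Equiv.ext fun x => ?_⟩
    simp only [Equiv.Perm.mul_apply, affineEquiv_apply, affineAut_apply]
    subst ha
    rw [hc]; ring
  · rintro ⟨ψ, hψ⟩
    obtain ⟨⟨u, c⟩, rfl⟩ := rackAut_eq_affine ψ
    have h := Equiv.ext_iff.mp hψ
    simp only [Equiv.Perm.mul_apply, affineEquiv_apply, affineAut_apply] at h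
    have h0 := h 0
    have h1 := h 1
    simp only [mul_zero, zero_add, mul_one] at h0 h1
    have ha : (a₁ : ZMod n) = a₂ := by
      refine u.isUnit.mul_left_cancel ?_
      linear_combination h1 - h0
    refine ⟨Units.ext ha, u, c, ?_⟩
    simp only
    rw [ha]
    linear_combination -h0
end Affine

section NT
variable {n : ℕ} [NeZero n]

lemma castHomEq (d : ℕ) (h : d ∣ n) (z : ZMod n) :
    ZMod.castHom h (ZMod d) z = ((z.val : ℕ) : ZMod d) := by
  conv_lhs => rw [← ZMod.natCast_rightInverse z]
  rw [map_natCast]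

lemma castHom_eq_zero_iff (d : ℕ) (h : d ∣ n) (z : ZMod n) :
    ZMod.castHom h (ZMod d) z = 0 ↔ d ∣ z.val := by
  rw [castHomEq d h, ZMod.natCast_eq_zero_iff]

lemma exists_mul_of_dvd (d : ℕ) (z : ZMod n) (hz : d ∣ z.val) :
    ∃ c : ZMod n, z = (d : ZMod n) * c := by
  refine ⟨((z.val / d : ℕ) : ZMod n), ?_⟩
  rw [← Nat.cast_mul, Nat.mul_div_cancel' hz, ZMod.natCast_rightInverse z]

lemma gcd_mod (d k : ℕ) : Nat.gcd d (k % d) = Nat.gcd d k := by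
  rw [Nat.gcd_comm d (k % d), ← Nat.gcd_rec]

lemma assoc_gcd (d : ℕ) [NeZero d] (x : ZMod d) :
    ∃ v : (ZMod d)ˣ, x = (v : ZMod d) * (Nat.gcd d x.val : ZMod d) := by
  set g := Nat.gcd d x.val with hg
  have hgd : g ∣ d := Nat.gcd_dvd_left _ _
  have hgx : g ∣ x.val := Nat.gcd_dvd_right _ _
  have hgpos : 0 < g := Nat.gcd_pos_of_pos_left _ (Nat.pos_of_ne_zero (NeZero.ne d))
  set d' := d / g with hd'
  have hd'd : d' ∣ d := Nat.div_dvd_of_dvd hgd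
  set m := x.val / g with hm
  have hco : Nat.Coprime m d' := (Nat.coprime_div_gcd_div_gcd (m := d) (n := x.val) hgpos).symm
  have hu : IsUnit ((m : ℕ) : ZMod d') := (ZMod.isUnit_iff_coprime m d').mpr hco
  obtain ⟨v, hv⟩ := ZMod.unitsMap_surjective hd'd hu.unit
  refine ⟨v, ?_⟩
  have hcast : ZMod.castHom hd'd (ZMod d') ((v : ZMod d) - (m : ZMod d)) = 0 := by
    rw [map_sub, map_natCast]
    have : ZMod.castHom hd'd (ZMod d') (v : ZMod d) = ((hu.unit : (ZMod d')ˣ) : ZMod d') := by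
      rw [← hv, ZMod.unitsMap_def]; rfl
    rw [this, IsUnit.unit_spec, sub_self]
  have hdvd : d' ∣ ((v : ZMod d) - (m : ZMod d)).val := (castHom_eq_zero_iff d' hd'd _).mp hcast
  obtain ⟨c, hc⟩ := exists_mul_of_dvd d' _ hdvd
  have hsub : (v : ZMod d) = (m : ZMod d) + (d' : ZMod d) * c := by rw [← hc]; ring
  have hdg : (d' : ZMod d) * (g : ZMod d) = 0 := by
    rw [← Nat.cast_mul, Nat.div_mul_cancel hgd, ZMod.natCast_self]
  have hmg : ((m : ZMod d)) * (g : ZMod d) = x := by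
    rw [← Nat.cast_mul, Nat.div_mul_cancel hgx, ZMod.natCast_rightInverse x]
  calc x = (m : ZMod d) * g := hmg.symm
    _ = ((m : ZMod d) + (d' : ZMod d) * c) * g := by
        have h0 : (d' : ZMod d) * c * g = 0 := by
          rw [mul_comm ((d' : ZMod d)) c, mul_assoc, hdg, mul_zero]
        rw [add_mul, h0, add_zero]
    _ = (v : ZMod d) * g := by rw [← hsub]

lemma gcd_unit_mul (d : ℕ) [NeZero d] (v : (ZMod d)ˣ) (x : ZMod d) :
    Nat.gcd d (((v : ZMod d) * x).val) = Nat.gcd d x.val := by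
  rw [ZMod.val_mul, gcd_mod, Nat.gcd_comm d _,
    Nat.Coprime.gcd_mul_left_cancel _ (ZMod.val_coe_unit_coprime v), Nat.gcd_comm]

/-- `d(a) = gcd(n, val(1 - a))`. -/
def dof (n : ℕ) (a : (ZMod n)ˣ) : ℕ := Nat.gcd n (1 - (a : ZMod n)).val

lemma dof_dvd (a : (ZMod n)ˣ) : dof n a ∣ n := Nat.gcd_dvd_left _ _

lemma dof_pos (a : (ZMod n)ˣ) : 0 < dof n a :=
  Nat.gcd_pos_of_pos_left _ (Nat.pos_of_ne_zero (NeZero.ne n))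

lemma dof_dvd_w (a : (ZMod n)ˣ) : dof n a ∣ (1 - (a : ZMod n)).val := Nat.gcd_dvd_right _ _

lemma gcd_dof_cast (a : (ZMod n)ˣ) (b : ZMod n) :
    Nat.gcd (dof n a) ((ZMod.castHom (dof_dvd a) (ZMod (dof n a)) b).val) =
      Nat.gcd (dof n a) b.val := by
  rw [castHomEq _ (dof_dvd a) b, ZMod.val_natCast, gcd_mod]

lemma exists_beta (a : (ZMod n)ˣ) :
    ∃ β : ZMod n, ((dof n a : ℕ) : ZMod n) = (1 - (a : ZMod n)) * β := by
  set w := (1 - (a : ZMod n)).val with hw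
  have h := Nat.gcd_eq_gcd_ab n w
  refine ⟨((Nat.gcdB n w : ℤ) : ZMod n), ?_⟩
  have h2 := congrArg (fun z : ℤ => (z : ZMod n)) h
  push_cast at h2
  rw [ZMod.natCast_self, zero_mul, zero_add] at h2
  have hww : ((w : ℕ) : ZMod n) = 1 - (a : ZMod n) := ZMod.natCast_rightInverse _
  rw [hww] at h2
  exact h2

lemma rel_iff_inv (p q : (ZMod n)ˣ × ZMod n) :
    rel n p q ↔ p.1 = q.1 ∧ Nat.gcd (dof n p.1) p.2.val = Nat.gcd (dof n q.1) q.2.val := by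
  obtain ⟨a, b₁⟩ := p
  obtain ⟨a', b₂⟩ := q
  constructor
  · rintro ⟨ha, u, c, hc⟩
    simp only at ha hc ⊢
    subst ha
    refine ⟨rfl, ?_⟩
    haveI : NeZero (dof n a) := ⟨(dof_pos a).ne'⟩
    set D := dof n a with hD
    set φ := ZMod.castHom (dof_dvd a) (ZMod D) with hφ
    have h0 : φ (1 - (a : ZMod n)) = 0 := (castHom_eq_zero_iff D (dof_dvd a) _).mpr (dof_dvd_w a)
    have hcast : φ b₂ = φ (u : ZMod n) * φ b₁ := by
      rw [hc, map_add, map_mul, map_mul, h0, zero_mul, add_zero]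
    have hunit : φ (u : ZMod n) = ((ZMod.unitsMap (dof_dvd a) u : (ZMod D)ˣ) : ZMod D) := rfl
    rw [← gcd_dof_cast a b₁, ← gcd_dof_cast a b₂, hcast, hunit, gcd_unit_mul]
  · rintro ⟨ha, hg⟩
    simp only at ha hg ⊢
    subst ha
    refine ⟨rfl, ?_⟩
    haveI : NeZero (dof n a) := ⟨(dof_pos a).ne'⟩
    set D := dof n a with hD
    set φ := ZMod.castHom (dof_dvd a) (ZMod D) with hφ
    obtain ⟨vx, hvx⟩ := assoc_gcd D (φ b₁)
    obtain ⟨vy, hvy⟩ := assoc_gcd D (φ b₂)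
    rw [gcd_dof_cast a b₁] at hvx
    rw [gcd_dof_cast a b₂, ← hg] at hvy
    obtain ⟨u, hu⟩ := ZMod.unitsMap_surjective (dof_dvd a) (vy * vx⁻¹)
    have hux : φ (u : ZMod n) = ((vy * vx⁻¹ : (ZMod D)ˣ) : ZMod D) := by
      rw [← hu]; rfl
    have hyx : φ b₂ = φ (u : ZMod n) * φ b₁ := by
      rw [hvx, hvy, hux]
      push_cast
      rw [mul_assoc, Units.inv_mul_cancel_left]
    have hz : φ (b₂ - (u : ZMod n) * b₁) = 0 := by
      rw [map_sub, map_mul, hyx]; ring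
    obtain ⟨c₀, hc₀⟩ := exists_mul_of_dvd D _ ((castHom_eq_zero_iff D (dof_dvd a) _).mp hz)
    obtain ⟨β, hβ⟩ := exists_beta a
    refine ⟨u, β * c₀, ?_⟩
    have : b₂ - (u : ZMod n) * b₁ = (1 - (a : ZMod n)) * (β * c₀) := by
      rw [hc₀, hβ]; ring
    linear_combination this

lemma dof_iff (t : ℕ) (ht : t ∣ n) (a : (ZMod n)ˣ) :
    t ∣ dof n a ↔ a ∈ (ZMod.unitsMap ht).ker := by
  have h1 : t ∣ dof n a ↔ t ∣ (1 - (a : ZMod n)).val :=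
    ⟨fun h => h.trans (dof_dvd_w a), fun h => Nat.dvd_gcd ht h⟩
  rw [h1, ← castHom_eq_zero_iff t ht, MonoidHom.mem_ker]
  rw [map_sub, map_one, sub_eq_zero]
  constructor
  · intro h
    ext
    rw [ZMod.unitsMap_def]
    exact h.symm
  · intro h
    have := congrArg (fun u : (ZMod t)ˣ => (u : ZMod t)) h
    exact (this : _).symm

end NT

section CNT
variable {n : ℕ} [NeZero n]

lemma card_fiber (t : ℕ) (ht : t ∣ n) [NeZero t] :
    (Finset.univ.filter (fun a : (ZMod n)ˣ => t ∣ dof n a)).card * t.totient = n.totient := by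
  classical
  have h1 : (Finset.univ.filter (fun a : (ZMod n)ˣ => t ∣ dof n a)).card
      = Nat.card (ZMod.unitsMap ht).ker := by
    rw [← Fintype.card_subtype]
    rw [Nat.card_eq_fintype_card]
    exact Fintype.card_congr (Equiv.subtypeEquivRight (fun a => dof_iff t ht a))
  rw [h1]
  have h2 : Nat.card (ZMod n)ˣ = Nat.card (ZMod t)ˣ * Nat.card (ZMod.unitsMap ht).ker := by
    rw [Subgroup.card_eq_card_quotient_mul_card_subgroup (ZMod.unitsMap ht).ker]
    congr 1
    exact Nat.card_congr (QuotientGroup.quotientKerEquivOfSurjective _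
      (ZMod.unitsMap_surjective ht)).toEquiv
  rw [Nat.card_eq_fintype_card, ZMod.card_units_eq_totient,
      Nat.card_eq_fintype_card, ZMod.card_units_eq_totient] at h2
  rw [mul_comm]
  exact h2.symm

/-- The finite index set of isomorphism classes. -/
noncomputable def SS (n : ℕ) [NeZero n] : Finset ((ZMod n)ˣ × ℕ) :=
  (Finset.univ ×ˢ n.divisors).filter (fun pr => pr.2 ∣ dof n pr.1)

lemma SS_card : (SS n).card = ∑ d ∈ n.divisors, n.totient / d.totient := by
  classical
  rw [SS, Finset.card_filter, Finset.sum_product]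
  rw [Finset.sum_comm]
  refine Finset.sum_congr rfl (fun t htmem => ?_)
  obtain ⟨ht, hn0⟩ := Nat.mem_divisors.mp htmem
  haveI : NeZero t := ⟨fun h => hn0 (by subst h; exact Nat.eq_zero_of_zero_dvd ht)⟩
  have h3 : ∑ a : (ZMod n)ˣ, (if t ∣ dof n a then 1 else 0)
      = (Finset.univ.filter (fun a : (ZMod n)ˣ => t ∣ dof n a)).card := by
    rw [Finset.card_filter]
  rw [h3]
  refine (Nat.div_eq_of_eq_mul_left
    (Nat.totient_pos.mpr (Nat.pos_of_ne_zero (NeZero.ne t))) ?_).symm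
  exact (card_fiber t ht).symm

/-- The complete invariant of a pair. -/
noncomputable def invP (n : ℕ) [NeZero n] (p : (ZMod n)ˣ × ZMod n) : (ZMod n)ˣ × ℕ :=
  (p.1, Nat.gcd (dof n p.1) p.2.val)

lemma rel_iff_invP (p q : (ZMod n)ˣ × ZMod n) : rel n p q ↔ invP n p = invP n q := by
  rw [rel_iff_inv, invP, invP, Prod.ext_iff]

lemma invP_mem (p : (ZMod n)ˣ × ZMod n) : invP n p ∈ SS n := by
  rw [SS, Finset.mem_filter, Finset.mem_product]
  have hdvd : Nat.gcd (dof n p.1) p.2.val ∣ dof n p.1 := Nat.gcd_dvd_left _ _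
  refine ⟨⟨Finset.mem_univ _, Nat.mem_divisors.mpr ⟨hdvd.trans (dof_dvd p.1), NeZero.ne n⟩⟩, hdvd⟩

noncomputable def quotEquivSS (n : ℕ) [NeZero n] : Quot (rel n) ≃ ↑(SS n) := by
  refine Equiv.ofBijective
    (Quot.lift (fun p => (⟨invP n p, invP_mem p⟩ : ↑(SS n)))
      (fun p q h => Subtype.ext ((rel_iff_invP p q).mp h))) ⟨?_, ?_⟩
  · rintro ⟨p⟩ ⟨q⟩ h
    exact Quot.sound ((rel_iff_invP p q).mpr (congrArg Subtype.val h))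
  · rintro ⟨⟨a, t⟩, hmem⟩
    rw [SS, Finset.mem_filter, Finset.mem_product] at hmem
    obtain ⟨⟨-, htd⟩, hdvd⟩ := hmem
    simp only at hdvd htd
    obtain ⟨ht, hn0⟩ := Nat.mem_divisors.mp htd
    refine ⟨Quot.mk _ (a, (t : ZMod n)), ?_⟩
    refine Subtype.ext ?_
    show invP n (a, (t : ZMod n)) = (a, t)
    rw [invP]
    refine Prod.ext rfl ?_
    show Nat.gcd (dof n a) ((t : ZMod n)).val = t
    rcases lt_or_eq_of_le (Nat.le_of_dvd (Nat.pos_of_ne_zero hn0) ht) with hlt | heq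
    · rw [ZMod.val_natCast_of_lt hlt]
      exact Nat.dvd_antisymm (Nat.gcd_dvd_right _ _) (Nat.dvd_gcd hdvd dvd_rfl)
    · rw [heq] at hdvd ⊢
      rw [ZMod.natCast_self, ZMod.val_zero, Nat.gcd_zero_right]
      exact Nat.dvd_antisymm (dof_dvd a) hdvd

end CNT

/-- The number of isomorphism classes of virtual quandles whose underlying quandle is the
dihedral quandle of order `n` (equivalently, the number of conjugacy classes of its
automorphism group) is `φ(n)·Σ_{d ∣ n} 1/φ(d) = Σ_{d ∣ n} φ(n)/φ(d)`. -/
theorem stmt_3 (n : ℕ) (hn : 0 < n) :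
    Nat.card (VirtualClasses (dihedralS n)) = ∑ d ∈ n.divisors, n.totient / d.totient := by
  haveI : NeZero n := ⟨hn.ne'⟩
  have e1 : Quot (rel n) ≃ VirtualClasses (dihedralS n) :=
    Quot.congr (affineEquiv n) (virtIso_iff n)
  have e2 : Quot (rel n) ≃ ↑(SS n) := quotEquivSS n
  rw [← Nat.card_congr e1, Nat.card_congr e2, Nat.card_eq_finsetCard, SS_card]
end

section
/- Let n be a positive integer and let R_n be the dihedral quandle of order n. For a ∈ ℤ/nℤ and u ∈ (ℤ/nℤ)ˣ let T_{a,u} : ℤ/nℤ → ℤ/nℤ denote the affine map x ↦ a + u·x, which is a quandle automorphism of R_n. Then the virtual quandles (R_n, T_{a,u}) and (R_n, T_{b,v}) are isomorphic if and only if u = v and there exist x ∈ ℤ/nℤ and y ∈ (ℤ/nℤ)ˣ such that b = y·a + (1−u)·x. -/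
/-- The affine transformation `T_{a,u} : x ↦ a + u·x` of `ℤ/nℤ`, as a bijection. -/
def T (n : ℕ) (a : ZMod n) (u : (ZMod n)ˣ) : Equiv.Perm (ZMod n) where
  toFun x := a + (u : ZMod n) * x
  invFun x := ((u⁻¹ : (ZMod n)ˣ) : ZMod n) * (x - a)
  left_inv x := by simp
  right_inv x := by simp

lemma T_apply (n : ℕ) (a : ZMod n) (u : (ZMod n)ˣ) (z : ZMod n) :
    T n a u z = a + (u : ZMod n) * z := rfl

/-- Any bijection of `ZMod n` satisfying the dihedral quandle homomorphism
condition is affine. -/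
lemma affine_of_quandle_aut {n : ℕ} (hn : 0 < n) (ψ : Equiv.Perm (ZMod n))
    (hq : ∀ g h : ZMod n, ψ (2 * h - g) = 2 * ψ h - ψ g) :
    ∀ z : ZMod n, ψ z = ψ 0 + (ψ 1 - ψ 0) * z := by
  have : NeZero n := ⟨hn.ne'⟩
  set c := ψ 0 with hc
  set w := ψ 1 - ψ 0 with hw
  -- prove for natural number casts by two-step induction
  have key : ∀ k : ℕ, ψ (k : ZMod n) = c + w * k ∧ ψ ((k : ℕ) + 1 : ZMod n) = c + w * ((k : ZMod n) + 1) := by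
    intro k
    induction k with
    | zero => exact ⟨by simp [hc, hw], by simp [hc, hw]⟩
    | succ m ih =>
      obtain ⟨h1, h2⟩ := ih
      have step : ψ ((m : ZMod n) + 2) = 2 * ψ ((m : ZMod n) + 1) - ψ (m : ZMod n) := by
        have := hq (m : ZMod n) ((m : ZMod n) + 1)
        have e : 2 * ((m : ZMod n) + 1) - (m : ZMod n) = (m : ZMod n) + 2 := by ring
        rwa [e] at this
      constructor
      · push_cast
        exact h2
      · push_cast
        have e : ((m : ZMod n) + 1) + 1 = (m : ZMod n) + 2 := by ring
        rw [e, step, h1, h2]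
        ring
  intro z
  have hz : ((z.val : ℕ) : ZMod n) = z := by
    simp [ZMod.natCast_val, ZMod.cast_id]
  calc ψ z = ψ ((z.val : ℕ) : ZMod n) := by rw [hz]
    _ = c + w * ((z.val : ℕ) : ZMod n) := (key z.val).1
    _ = c + w * z := by rw [hz]

/-- The virtual quandles `(R_n, T_{a,u})` and `(R_n, T_{b,v})` over the dihedral quandle
`R_n` (with `s_g(h) = 2h - g`) are isomorphic if and only if `u = v` and
`b = y·a + (1 − u)·x` for some `x ∈ ℤ/nℤ` and `y ∈ (ℤ/nℤ)ˣ`. -/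
theorem stmt_4 (n : ℕ) (hn : 0 < n) (a b : ZMod n) (u v : (ZMod n)ˣ) :
    (∃ ψ : Equiv.Perm (ZMod n),
        (∀ g h : ZMod n, ψ (2 * h - g) = 2 * ψ h - ψ g) ∧ ψ * T n a u = T n b v * ψ) ↔
      u = v ∧ ∃ (x : ZMod n) (y : (ZMod n)ˣ),
        b = (y : ZMod n) * a + (1 - (u : ZMod n)) * x := by
  constructor
  · rintro ⟨ψ, hq, hcomm⟩
    have hcomm' : ∀ z : ZMod n, ψ (a + (u : ZMod n) * z) = b + (v : ZMod n) * ψ z := by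
      intro z
      have := congrArg (fun f : Equiv.Perm (ZMod n) => f z) hcomm
      simpa [Equiv.Perm.mul_apply, T_apply] using this
    set c := ψ 0 with hc
    set w := ψ 1 - ψ 0 with hw
    have haff : ∀ z : ZMod n, ψ z = c + w * z := affine_of_quandle_aut hn ψ hq
    -- w is a unit
    obtain ⟨t, ht⟩ := ψ.surjective (c + 1)
    have hwt : w * t = 1 := by
      have h1 := haff t
      rw [ht] at h1
      exact (add_left_cancel h1).symm
    have hwu : IsUnit w := IsUnit.of_mul_eq_one (a := w) t hwt
    -- evaluate the intertwining relation at 0 and 1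
    have h0 : c + w * a = b + (v : ZMod n) * c := by
      have := hcomm' 0
      rw [haff (a + (u : ZMod n) * 0)] at this
      simpa [hc] using this
    have h1 : c + w * (a + (u : ZMod n)) = b + (v : ZMod n) * (c + w) := by
      have := hcomm' 1
      rw [haff (a + (u : ZMod n) * 1), haff 1] at this
      simpa using this
    have huv : (u : ZMod n) * w = (v : ZMod n) * w := by
      linear_combination h1 - h0
    have huv' : u = v := by
      have : (u : ZMod n) = (v : ZMod n) := by
        have hw' : IsUnit w := hwu
        exact hw'.mul_right_cancel huv
      exact Units.ext this
    refine ⟨huv', c, hwu.unit, ?_⟩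
    rw [IsUnit.unit_spec]
    -- from h0 : c + w*a = b + v*c, and u = v
    have hv : (v : ZMod n) = (u : ZMod n) := by rw [huv']
    rw [hv] at h0
    linear_combination -h0

  · rintro ⟨rfl, x, y, hb⟩
    refine ⟨T n x y, ?_, ?_⟩
    · intro g h
      simp only [T_apply]
      ring
    · ext z
      simp only [Equiv.Perm.mul_apply, T_apply, hb]
      ring
end

section
/- Let G be a group. The center of G is trivial if and only if the group of quandle automorphisms of the conjugation quandle Conj(G) coincides with the group of group automorphisms of G; that is, Z(G) = 1 if and only if every quandle automorphism of Conj(G) is a group automorphism of G (every group automorphism of G is always a quandle automorphism of Conj(G)). -/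
/-- Every group automorphism of `G` is a quandle automorphism of the conjugation quandle
`Conj(G)` (with `s_x(y) = x y x⁻¹`), and the center of `G` is trivial if and only if,
conversely, every quandle automorphism of `Conj(G)` is a group automorphism of `G`. -/
theorem stmt_9 {G : Type*} [Group G] :
    (∀ ψ : Equiv.Perm G, (∀ a b : G, ψ (a * b) = ψ a * ψ b) →
        ∀ x y : G, ψ (x * y * x⁻¹) = ψ x * ψ y * (ψ x)⁻¹) ∧
    (Subgroup.center G = ⊥ ↔
      ∀ ψ : Equiv.Perm G, (∀ x y : G, ψ (x * y * x⁻¹) = ψ x * ψ y * (ψ x)⁻¹) →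
        ∀ a b : G, ψ (a * b) = ψ a * ψ b) := by
  constructor
  · intro ψ hψ x y
    have h1 : ψ 1 = 1 := by
      have := hψ 1 1
      rw [mul_one] at this
      exact right_eq_mul.mp this
    have hinv : ψ x⁻¹ = (ψ x)⁻¹ := by
      have := hψ x x⁻¹
      rw [mul_inv_cancel, h1] at this
      exact eq_inv_of_mul_eq_one_right this.symm
    rw [hψ, hψ, hinv]
  · constructor
    · intro hc ψ hψ a b
      have key : ∀ g : G, ψ (a * b) * g * (ψ (a * b))⁻¹
          = (ψ a * ψ b) * g * (ψ a * ψ b)⁻¹ := by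
        intro g
        have hg : g = ψ (ψ.symm g) := (ψ.apply_symm_apply g).symm
        rw [hg, ← hψ, show a * b * ψ.symm g * (a * b)⁻¹
              = a * (b * ψ.symm g * b⁻¹) * a⁻¹ by group, hψ, hψ]
        group
      have hz : (ψ a * ψ b)⁻¹ * ψ (a * b) ∈ Subgroup.center G := by
        rw [Subgroup.mem_center_iff]
        intro g
        have := key g
        have h2 : ψ (a * b) * g = (ψ a * ψ b) * g * (ψ a * ψ b)⁻¹ * ψ (a * b) := by
          rw [← this]; group
        calc g * ((ψ a * ψ b)⁻¹ * ψ (a * b))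
            = (ψ a * ψ b)⁻¹ * (ψ a * ψ b * g * (ψ a * ψ b)⁻¹ * ψ (a * b)) := by group
          _ = (ψ a * ψ b)⁻¹ * (ψ (a * b) * g) := by rw [← h2]
          _ = (ψ a * ψ b)⁻¹ * ψ (a * b) * g := by group
      rw [hc, Subgroup.mem_bot] at hz
      have := mul_eq_one_iff_inv_eq.mp hz
      rw [inv_inv] at this
      exact this.symm
    · intro h
      rw [eq_bot_iff]
      intro z hz
      rw [Subgroup.mem_center_iff] at hz
      have hq : ∀ x y : G, (Equiv.mulLeft z) (x * y * x⁻¹)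
          = (Equiv.mulLeft z) x * (Equiv.mulLeft z) y * ((Equiv.mulLeft z) x)⁻¹ := by
        intro x y
        simp only [Equiv.coe_mulLeft]
        calc z * (x * y * x⁻¹)
            = z * ((x * y * x⁻¹) * z) * z⁻¹ := by group
          _ = z * (z * (x * y * x⁻¹)) * z⁻¹ := by rw [hz]
          _ = z * (z * x) * (y * x⁻¹ * z⁻¹) := by group
          _ = z * (x * z) * (y * x⁻¹ * z⁻¹) := by rw [← hz x]
          _ = z * x * (z * y) * (z * x)⁻¹ := by group
      have := h (Equiv.mulLeft z) hq 1 1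
      simp only [Equiv.coe_mulLeft, one_mul, mul_one] at this
      rw [Subgroup.mem_bot]
      exact right_eq_mul.mp this
end

section
/- Let n be a positive integer. Then Σ_{u ∈ (ℤ/nℤ)ˣ} τ(gcd(n, 1 − u)) = Σ_{d | n} φ(n)/φ(d), where the left-hand sum runs over all units u of ℤ/nℤ (with gcd computed using any integer representative of 1 − u), the right-hand sum runs over the positive divisors d of n, τ is the number-of-divisors function, and φ is Euler's totient function (note φ(d) divides φ(n) for every divisor d of n). -/
lemma ker_card_aux {n d : ℕ} [NeZero n] (h : d ∣ n) :
    (Finset.univ.filter fun u : (ZMod n)ˣ => ZMod.unitsMap h u = 1).card =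
      n.totient / d.totient := by
  haveI : NeZero d := ⟨fun hd => (NeZero.ne n) (by simpa [hd] using h)⟩
  have hker : (Finset.univ.filter fun u : (ZMod n)ˣ => ZMod.unitsMap h u = 1).card =
      Nat.card (ZMod.unitsMap h).ker := by
    rw [Nat.card_eq_fintype_card, Fintype.card_subtype]
    congr 1
    ext u
    simp [MonoidHom.mem_ker]
  have hidx : (ZMod.unitsMap h).ker.index = Nat.card (ZMod d)ˣ := by
    rw [Subgroup.index_ker, MonoidHom.range_eq_top_of_surjective _ (ZMod.unitsMap_surjective h)]
    exact Nat.card_congr Subgroup.topEquiv.toEquiv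
  have hmul := (ZMod.unitsMap h).ker.card_mul_index
  rw [hidx] at hmul
  rw [hker]
  have hpos : 0 < Nat.card (ZMod d)ˣ := Nat.card_pos
  have : Nat.card (ZMod.unitsMap h).ker = Nat.card (ZMod n)ˣ / Nat.card (ZMod d)ˣ :=
    (Nat.div_eq_of_eq_mul_left hpos hmul.symm).symm
  rw [this, Nat.card_eq_fintype_card, Nat.card_eq_fintype_card,
    ZMod.card_units_eq_totient, ZMod.card_units_eq_totient]

lemma dvd_iff_unitsMap {n d : ℕ} [NeZero n] (h : d ∣ n) (u : (ZMod n)ˣ) :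
    d ∣ (1 - (u : ZMod n)).val ↔ ZMod.unitsMap h u = 1 := by
  rw [← ZMod.natCast_eq_zero_iff, ZMod.natCast_val]
  have : (ZMod.cast (1 - (u : ZMod n)) : ZMod d) = ZMod.castHom h (ZMod d) (1 - u) := rfl
  rw [this, map_sub, map_one, sub_eq_zero, Units.ext_iff]
  simp [ZMod.unitsMap_def, eq_comm]

/-- `Σ_{u ∈ (ℤ/nℤ)ˣ} τ(gcd(n, 1 − u)) = Σ_{d ∣ n} φ(n)/φ(d)`, where `τ` is the
number-of-divisors function and `φ` is Euler's totient function (note `φ(d) ∣ φ(n)`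
for every `d ∣ n`). -/
theorem stmt_15 (n : ℕ) [NeZero n] :
    ∑ u : (ZMod n)ˣ, (Nat.gcd n ((1 - (u : ZMod n)).val)).divisors.card =
      ∑ d ∈ n.divisors, n.totient / d.totient := by
  have hn : n ≠ 0 := NeZero.ne n
  have step1 : ∀ m : ℕ, (Nat.gcd n m).divisors.card =
      (n.divisors.filter (· ∣ m)).card := by
    intro m
    congr 1
    ext d
    simp [Nat.mem_divisors, Nat.dvd_gcd_iff, hn, Nat.gcd_eq_zero_iff, and_comm, and_assoc]
  simp only [step1, Finset.card_filter]
  rw [Finset.sum_comm]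
  refine Finset.sum_congr rfl fun d hd => ?_
  have h : d ∣ n := (Nat.mem_divisors.mp hd).1
  rw [← ker_card_aux h, Finset.card_filter]
  refine Finset.sum_congr rfl fun u _ => ?_
  simp only [dvd_iff_unitsMap h]
end
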